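/- The intrinsic mean characterization holds for the two-point equal-weight case: for Hermitian positive definite p₁, p₂, the geodesic midpoint m = η(p₁,p₂,1/2) satisfies the Karcher equation Log_m(p₁) + Log_m(p₂) = 0. -/

import Mathlib

open Matrix
open scoped ComplexOrder Classical

/-- Matrix logarithm of a Hermitian (in particular HPD) matrix, via the spectral theorem. -/
noncomputable def mLog {d : ℕ} (A : Matrix (Fin d) (Fin d) ℂ) : Matrix (Fin d) (Fin d) ℂ :=
  if hA : A.IsHermitian then
    (hA.eigenvectorUnitary : Matrix (Fin d) (Fin d) ℂ) *
      Matrix.diagonal (fun i => (Real.log (hA.eigenvalues i) : ℂ)) *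
      (star hA.eigenvectorUnitary : Matrix (Fin d) (Fin d) ℂ)
  else 0

/-- Matrix exponential. -/
noncomputable def mExp {d : ℕ} (A : Matrix (Fin d) (Fin d) ℂ) : Matrix (Fin d) (Fin d) ℂ :=
  NormedSpace.exp A

/-- Hermitian positive (semi)definite square root. -/
noncomputable def msqrt {d : ℕ} (A : Matrix (Fin d) (Fin d) ℂ) : Matrix (Fin d) (Fin d) ℂ :=
  if hA : A.PosSemidef then (hA.1.eigenvectorUnitary : Matrix (Fin d) (Fin d) ℂ) *
    diagonal ((↑) ∘ (√·) ∘ hA.1.eigenvalues) * (star hA.1.eigenvectorUnitary : Matrix (Fin d) (Fin d) ℂ) else 1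

/-- Frobenius norm. -/
noncomputable def frobNorm {d : ℕ} (A : Matrix (Fin d) (Fin d) ℂ) : ℝ :=
  Real.sqrt ((Aᴴ * A).trace.re)

/-- Affine-invariant Riemannian distance. -/
noncomputable def deltaR {d : ℕ} (p₁ p₂ : Matrix (Fin d) (Fin d) ℂ) : ℝ :=
  frobNorm (mLog ((msqrt p₁)⁻¹ * p₂ * (msqrt p₁)⁻¹))

/-- Real matrix power of an HPD matrix: `x^t = Exp (t • Log x)`. -/
noncomputable def mPow {d : ℕ} (A : Matrix (Fin d) (Fin d) ℂ) (t : ℝ) : Matrix (Fin d) (Fin d) ℂ :=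
  mExp ((t : ℂ) • mLog A)

/-- Riemannian logarithmic map at `p`. -/
noncomputable def logMap {d : ℕ} (p q : Matrix (Fin d) (Fin d) ℂ) : Matrix (Fin d) (Fin d) ℂ :=
  msqrt p * mLog ((msqrt p)⁻¹ * q * (msqrt p)⁻¹) * msqrt p

/-- Riemannian exponential map at `p`. -/
noncomputable def expMap {d : ℕ} (p h : Matrix (Fin d) (Fin d) ℂ) : Matrix (Fin d) (Fin d) ℂ :=
  msqrt p * mExp ((msqrt p)⁻¹ * h * (msqrt p)⁻¹) * msqrt p

/-- Affine-invariant geodesic from `p₁` to `p₂`. -/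
noncomputable def geo {d : ℕ} (p₁ p₂ : Matrix (Fin d) (Fin d) ℂ) (t : ℝ) :
    Matrix (Fin d) (Fin d) ℂ :=
  msqrt p₁ * mPow ((msqrt p₁)⁻¹ * p₂ * (msqrt p₁)⁻¹) t * msqrt p₁

/-! The midpoint `m = p₁ # p₂` solves the Riccati equation `m p₁⁻¹ m = p₂`. Congruence by
`m^{-1/2}` therefore carries `p₁` and `p₂` to a pair `X`, `X⁻¹`, whose logarithms cancel.
Under the L² operator norm, matrices form a C⋆-algebra, so `mLog`, `msqrt` and `mExp` are
the continuous functional calculus `CFC.log`, `CFC.sqrt` and `exp`, and its lemmas apply. -/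

open scoped Matrix.Norms.L2Operator MatrixOrder

section

variable {d : ℕ}

lemma Matrix.IsHermitian.posDef_conjugate_iff {s A : Matrix (Fin d) (Fin d) ℂ}
    (hs : s.IsHermitian) (hu : IsUnit s) : (s * A * s).PosDef ↔ A.PosDef := by
  simpa only [star_eq_conjTranspose, hs.eq] using hu.posDef_star_right_conjugate_iff

lemma mLog_eq_log {A : Matrix (Fin d) (Fin d) ℂ} (hA : A.IsHermitian) :
    mLog A = CFC.log A := by
  rw [CFC.log, hA.cfc_eq, mLog, dif_pos hA]
  rfl

lemma isSelfAdjoint_mLog (A : Matrix (Fin d) (Fin d) ℂ) : IsSelfAdjoint (mLog A) := by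
  by_cases hA : A.IsHermitian
  · rw [mLog_eq_log hA]
    exact IsSelfAdjoint.log
  · rw [mLog, dif_neg hA]
    exact .zero _

lemma mExp_mLog {A : Matrix (Fin d) (Fin d) ℂ} (hA : A.PosDef) : mExp (mLog A) = A := by
  rw [mExp, mLog_eq_log hA.isHermitian]
  exact CFC.exp_log A hA.isStrictlyPositive

lemma mLog_inv {A : Matrix (Fin d) (Fin d) ℂ} (hA : A.PosDef) : mLog A⁻¹ = -mLog A := by
  rw [mLog_eq_log hA.inv.isHermitian, mLog_eq_log hA.isHermitian]
  conv_lhs => rw [← CFC.exp_log A hA.isStrictlyPositive, ← Matrix.exp_neg]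
  exact CFC.log_exp _

lemma msqrt_eq_sqrt {A : Matrix (Fin d) (Fin d) ℂ} (hA : A.PosSemidef) :
    msqrt A = CFC.sqrt A := by
  rw [CFC.sqrt_eq_real_sqrt A hA.nonneg, cfcₙ_eq_cfc, hA.1.cfc_eq, msqrt, dif_pos hA]
  rfl

lemma msqrt_mul_self {A : Matrix (Fin d) (Fin d) ℂ} (hA : A.PosSemidef) :
    msqrt A * msqrt A = A := by
  rw [msqrt_eq_sqrt hA]
  exact CFC.sqrt_mul_sqrt_self A hA.nonneg

lemma Matrix.PosDef.msqrt {A : Matrix (Fin d) (Fin d) ℂ} (hA : A.PosDef) : (msqrt A).PosDef := by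
  rw [msqrt_eq_sqrt hA.posSemidef]
  exact hA.isStrictlyPositive.sqrt.posDef

lemma posDef_mPow (A : Matrix (Fin d) (Fin d) ℂ) (t : ℝ) : (mPow A t).PosDef := by
  have hsa : IsSelfAdjoint ((t : ℂ) • mLog A) :=
    IsSelfAdjoint.smul (Complex.conj_ofReal t) (isSelfAdjoint_mLog A)
  exact ((Matrix.isUnit_exp _).isStrictlyPositive hsa.exp_nonneg).posDef

lemma mPow_add (A : Matrix (Fin d) (Fin d) ℂ) (s t : ℝ) :
    mPow A (s + t) = mPow A s * mPow A t := by
  rw [mPow, mPow, mPow, mExp, mExp, mExp, Complex.ofReal_add, add_smul]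
  exact Matrix.exp_add_of_commute _ _ ((Commute.refl _).smul_left _ |>.smul_right _)

lemma mPow_one {A : Matrix (Fin d) (Fin d) ℂ} (hA : A.PosDef) : mPow A 1 = A := by
  rw [mPow, Complex.ofReal_one, one_smul, mExp_mLog hA]

lemma Matrix.PosDef.geo {p₁ : Matrix (Fin d) (Fin d) ℂ} (hp₁ : p₁.PosDef)
    (p₂ : Matrix (Fin d) (Fin d) ℂ) (t : ℝ) : (geo p₁ p₂ t).PosDef :=
  (hp₁.msqrt.isHermitian.posDef_conjugate_iff hp₁.msqrt.isUnit).mpr (posDef_mPow _ t)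

lemma geo_half_mul_inv_mul {p₁ p₂ : Matrix (Fin d) (Fin d) ℂ} (hp₁ : p₁.PosDef)
    (hp₂ : p₂.PosDef) : geo p₁ p₂ (1 / 2) * p₁⁻¹ * geo p₁ p₂ (1 / 2) = p₂ := by
  rw [geo]
  set s := msqrt p₁
  have hs : IsUnit s.det := (Matrix.isUnit_iff_isUnit_det s).mp hp₁.msqrt.isUnit
  have hp₁_inv : p₁⁻¹ = s⁻¹ * s⁻¹ := by rw [← Matrix.mul_inv_rev, msqrt_mul_self hp₁.posSemidef]
  have hq : (s⁻¹ * p₂ * s⁻¹).PosDef :=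
    (hp₁.msqrt.inv.isHermitian.posDef_conjugate_iff hp₁.msqrt.inv.isUnit).mpr hp₂
  set h := mPow (s⁻¹ * p₂ * s⁻¹) (1 / 2)
  have hh : h * h = s⁻¹ * p₂ * s⁻¹ := by rw [← mPow_add, add_halves, mPow_one hq]
  calc s * h * s * p₁⁻¹ * (s * h * s)
      = s * (h * h) * s := by
        simp only [hp₁_inv, mul_assoc, Matrix.mul_nonsing_inv_cancel_left _ _ hs,
          Matrix.nonsing_inv_mul_cancel_left _ _ hs]
    _ = p₂ := by
        simp only [hh, mul_assoc, Matrix.nonsing_inv_mul _ hs, mul_one,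
          Matrix.mul_nonsing_inv_cancel_left _ _ hs]

lemma logMap_add_logMap_of_mul_inv_mul {m p q : Matrix (Fin d) (Fin d) ℂ} (hm : m.PosDef)
    (hp : p.PosDef) (hq : m * p⁻¹ * m = q) : logMap m p + logMap m q = 0 := by
  rw [logMap, logMap]
  set r := msqrt m
  have hr : IsUnit r.det := (Matrix.isUnit_iff_isUnit_det r).mp hm.msqrt.isUnit
  have hX : (r⁻¹ * p * r⁻¹).PosDef :=
    (hm.msqrt.inv.isHermitian.posDef_conjugate_iff hm.msqrt.inv.isUnit).mpr hp
  have hqX : r⁻¹ * q * r⁻¹ = (r⁻¹ * p * r⁻¹)⁻¹ := by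
    have hrr : r * r = m := msqrt_mul_self hm.posSemidef
    rw [← hq, ← hrr, Matrix.mul_inv_rev, Matrix.mul_inv_rev,
      Matrix.nonsing_inv_nonsing_inv r hr]
    simp only [mul_assoc, Matrix.nonsing_inv_mul_cancel_left _ _ hr,
      Matrix.mul_nonsing_inv _ hr, mul_one]
  rw [hqX, mLog_inv hX, mul_neg, neg_mul, add_neg_cancel]

end

theorem geo_midpoint_karcher {d : ℕ} (p₁ p₂ : Matrix (Fin d) (Fin d) ℂ)
    (hp₁ : p₁.PosDef) (hp₂ : p₂.PosDef) :
    logMap (geo p₁ p₂ (1 / 2)) p₁ + logMap (geo p₁ p₂ (1 / 2)) p₂ = 0 :=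
  logMap_add_logMap_of_mul_inv_mul (hp₁.geo p₂ _) hp₁ (geo_half_mul_inv_mul hp₁ hp₂)
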